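/- Let K be a field of characteristic zero, let V₁, …, V_k be K-vector spaces with dim V_i = n_i + 1, let H ⊆ V₁ be a subspace of dimension h, let W = V₂ ⊗ ⋯ ⊗ V_k, and let π : V₁ ⊗ W → (V₁/H) ⊗ W be the quotient map tensored with the identity. Let v₁ ∈ V₁, …, v_k ∈ V_k be nonzero and let T_p ⊆ V₁ ⊗ ⋯ ⊗ V_k be the affine tangent space at p = v₁ ⊗ ⋯ ⊗ v_k. (1) If v₁ ∉ H, then dim(T_p ∩ (H ⊗ W)) = h and dim π(T_p) = 1 + (n₁ − h) + Σ_{i=2}^k n_i. (2) If v₁ ∈ H, then dim(T_p ∩ (H ⊗ W)) = h + Σ_{i=2}^k n_i and dim π(T_p) = n₁ + 1 − h. -/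

import Mathlib

/-!
Put `w = ⊗ᵢ vᵢ` and let `T ⊆ W` be the tangent space of the Segre variety of `W` at `w`.
Extending each `vᵢ` to a basis of `Vᵢ`, `T` is spanned by the product basis tensors that differ
from `w` in at most one factor, so `dim T = 1 + ∑ nᵢ`. The tangent space is
`T_p = V₁ ⊗ w + v₁ ⊗ T`, and in general the two summands of `X ⊗ y + x ⊗ T` (with `y ∈ T`)
meet exactly in the line through `x ⊗ y`: a functional `g` with `g x = 1` turns
`a ⊗ y = x ⊗ t` into `t = g a • y`. Hence `dim (X ⊗ y + x ⊗ T) = dim X + dim T - 1`.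

Since `π = mkQ ⊗ id`, `π(T_p) = (V₁/H) ⊗ w + [v₁] ⊗ T`. If `v₁ ∉ H` then `[v₁] ≠ 0` and this has
dimension `dim (V₁/H) + ∑ nᵢ`; if `v₁ ∈ H` it collapses to `(V₁/H) ⊗ w`. The dimension of the
trace `T_p ∩ ker π` then follows by rank–nullity for `π` restricted to `T_p`.
-/

open scoped TensorProduct
open Module

section TensorTangent

variable {K X X' Y : Type*} [Field K] [AddCommGroup X] [Module K X] [AddCommGroup X']
  [Module K X'] [AddCommGroup Y] [Module K Y]

theorem TensorProduct.mk_injective {x : X} (hx : x ≠ 0) :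
    Function.Injective (TensorProduct.mk K X Y x) := by
  obtain ⟨g, hg⟩ := Projective.exists_dual_eq_one K hx
  refine Function.LeftInverse.injective
    (g := TensorProduct.lid K Y ∘ LinearMap.rTensor Y g) fun y => ?_
  simp [hg]

theorem TensorProduct.flip_mk_injective {y : Y} (hy : y ≠ 0) :
    Function.Injective ((TensorProduct.mk K X Y).flip y) := by
  obtain ⟨g, hg⟩ := Projective.exists_dual_eq_one K hy
  refine Function.LeftInverse.injective
    (g := TensorProduct.rid K X ∘ LinearMap.lTensor X g) fun x => ?_
  simp [hg]

/-- `X ⊗ y + x ⊗ T`; for `T` the Segre tangent space at `y` this is the tangent space of the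
Segre variety of `X ⊗ Y` at `x ⊗ y`. -/
def tensorTangent (x : X) (y : Y) (T : Submodule K Y) : Submodule K (X ⊗[K] Y) :=
  LinearMap.range ((TensorProduct.mk K X Y).flip y) ⊔ T.map (TensorProduct.mk K X Y x)

theorem range_flip_mk_inf_map_mk {x : X} (hx : x ≠ 0) {y : Y} {T : Submodule K Y}
    (hyT : y ∈ T) :
    LinearMap.range ((TensorProduct.mk K X Y).flip y) ⊓ T.map (TensorProduct.mk K X Y x) =
      K ∙ (x ⊗ₜ y) := by
  refine le_antisymm ?_ ?_
  · rintro z ⟨⟨a, rfl⟩, t, -, hat⟩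
    obtain ⟨g, hg⟩ := Projective.exists_dual_eq_one K hx
    have ht : t = g a • y := by
      simpa [hg] using congrArg (TensorProduct.lid K Y ∘ LinearMap.rTensor Y g) hat
    exact Submodule.mem_span_singleton.mpr ⟨g a, by simp [← hat, ht]⟩
  · rw [Submodule.span_singleton_le_iff_mem]
    exact ⟨⟨x, rfl⟩, y, hyT, rfl⟩

theorem finrank_tensorTangent [FiniteDimensional K X] {x : X} (hx : x ≠ 0) {y : Y} (hy : y ≠ 0)
    {T : Submodule K Y} [FiniteDimensional K T] (hyT : y ∈ T) :
    finrank K (tensorTangent x y T) + 1 = finrank K X + finrank K T := by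
  have hrange : finrank K (LinearMap.range ((TensorProduct.mk K X Y).flip y)) = finrank K X :=
    LinearMap.finrank_range_of_inj (TensorProduct.flip_mk_injective hy)
  have hmap : finrank K (T.map (TensorProduct.mk K X Y x)) = finrank K T :=
    (Submodule.equivMapOfInjective _ (TensorProduct.mk_injective hx) T).finrank_eq.symm
  have hxy : x ⊗ₜ[K] y ≠ 0 := by simpa using (TensorProduct.mk_injective (Y := Y) hx).ne hy
  have hsup := Submodule.finrank_sup_add_finrank_inf_eq
    (LinearMap.range ((TensorProduct.mk K X Y).flip y)) (T.map (TensorProduct.mk K X Y x))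
  rwa [range_flip_mk_inf_map_mk hx hyT, finrank_span_singleton hxy, hrange, hmap] at hsup

theorem tensorTangent_zero (y : Y) (T : Submodule K Y) :
    tensorTangent (0 : X) y T = LinearMap.range ((TensorProduct.mk K X Y).flip y) := by
  simp [tensorTangent]

theorem map_tensorTangent {f : X →ₗ[K] X'} (hf : Function.Surjective f) (x : X) (y : Y)
    (T : Submodule K Y) :
    (tensorTangent x y T).map (TensorProduct.map f LinearMap.id) = tensorTangent (f x) y T := by
  have hflip : TensorProduct.map f LinearMap.id ∘ₗ (TensorProduct.mk K X Y).flip y =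
      (TensorProduct.mk K X' Y).flip y ∘ₗ f := by
    ext; simp
  have hmk : TensorProduct.map f LinearMap.id ∘ₗ TensorProduct.mk K X Y x =
      TensorProduct.mk K X' Y (f x) := by
    ext; simp
  rw [tensorTangent, tensorTangent, Submodule.map_sup, ← LinearMap.range_comp, hflip,
    LinearMap.range_comp_of_range_eq_top _ (LinearMap.range_eq_top.mpr hf),
    ← Submodule.map_comp, hmk]

end TensorTangent

theorem Submodule.finrank_map_add_finrank_inf_ker {K M N : Type*} [Field K] [AddCommGroup M]
    [Module K M] [AddCommGroup N] [Module K N] (f : M →ₗ[K] N) (p : Submodule K M)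
    [FiniteDimensional K p] :
    finrank K (p.map f) + finrank K (p ⊓ LinearMap.ker f : Submodule K M) = finrank K p := by
  rw [← (f.domRestrict p).finrank_range_add_finrank_ker, LinearMap.range_domRestrict,
    LinearMap.ker_domRestrict, ← Submodule.finrank_map_subtype_eq, Submodule.map_comap_subtype]

theorem Basis.exists_fin_succ_zero_eq {K M : Type*} [Field K] [AddCommGroup M] [Module K M]
    [FiniteDimensional K M] {d : ℕ} (hd : finrank K M = d + 1) {x : M} (hx : x ≠ 0) :
    ∃ b : Basis (Fin (d + 1)) K M, b 0 = x := by
  have hli : LinearIndepOn K id {x} := (linearIndepOn_singleton_iff K).mpr hx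
  let b := Basis.extend hli
  have hxb : x ∈ hli.extend (Set.subset_univ _) := hli.subset_extend _ rfl
  have : Fintype (hli.extend (Set.subset_univ _)) := FiniteDimensional.fintypeBasisIndex b
  let e := Fintype.equivFinOfCardEq (by rw [← finrank_eq_card_basis b, hd])
  refine ⟨b.reindex (e.trans (Equiv.swap (e ⟨x, hxb⟩) 0)), ?_⟩
  simp [b, Equiv.swap_apply_right]

section Segre

variable {K : Type*} [Field K] {ι : Type*} {V : ι → Type*} [∀ i, AddCommGroup (V i)]
  [∀ i, Module K (V i)]

theorem PiTensorProduct.tprod_ne_zero [Finite ι] {v : ∀ i, V i} (hv : ∀ i, v i ≠ 0) :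
    PiTensorProduct.tprod K v ≠ 0 := by
  have hli (i : ι) : LinearIndepOn K id {v i} := (linearIndepOn_singleton_iff K).mpr (hv i)
  have := (Basis.piTensorProduct fun i => Basis.extend (hli i)).ne_zero
    fun i => ⟨v i, (hli i).subset_extend _ rfl⟩
  simpa [Basis.extend_apply_self] using this

variable [DecidableEq ι]

variable (K) in
/-- The summand `K ∙ tprod K v` is redundant unless `ι` is empty. -/
def segreTangent (v : ∀ i, V i) : Submodule K (⨂[K] i, V i) :=
  (K ∙ PiTensorProduct.tprod K v) ⊔
    ⨆ i, LinearMap.range ((PiTensorProduct.tprod K).toLinearMap v i)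

/-- The multi-indices with at most one nonzero entry. -/
def segreTangentIndex {n : ι → ℕ} : Option (Σ i, Fin (n i)) → ∀ i, Fin (n i + 1) :=
  fun o => o.elim 0 fun c => Pi.single c.1 c.2.succ

theorem segreTangentIndex_injective {n : ι → ℕ} :
    Function.Injective (segreTangentIndex (n := n)) := by
  have single_ne_zero (i : ι) (c : Fin (n i)) :
      Pi.single (M := fun i => Fin (n i + 1)) i c.succ ≠ 0 :=
    fun h => c.succ_ne_zero (by simpa using congrFun h i)
  rintro (_ | ⟨i, c⟩) (_ | ⟨j, d⟩) h
  · rfl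
  · exact absurd h.symm (single_ne_zero j d)
  · exact absurd h (single_ne_zero i c)
  · obtain rfl : i = j := by
      by_contra hij
      simpa [segreTangentIndex, Pi.single_apply, hij] using congrFun h i
    simpa [segreTangentIndex] using h

theorem segreTangent_eq_span [Finite ι] {n : ι → ℕ} (b : ∀ i, Basis (Fin (n i + 1)) K (V i)) :
    segreTangent K (fun i => b i 0) =
      Submodule.span K (Set.range (Basis.piTensorProduct b ∘ segreTangentIndex)) := by
  set B := Basis.piTensorProduct b
  have hline (i : ι) :
      LinearMap.range ((PiTensorProduct.tprod K).toLinearMap (fun j => b j 0) i) =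
        (K ∙ B 0) ⊔ Submodule.span K (Set.range fun c : Fin (n i) => B (Pi.single i c.succ)) := by
    have hbasis : (PiTensorProduct.tprod K).toLinearMap (fun j => b j 0) i ∘ b i =
        fun c => B (Pi.single i c) := by
      funext c
      simp only [Function.comp_apply, MultilinearMap.toLinearMap_apply, B,
        Basis.piTensorProduct_apply, Pi.single, Function.apply_update (fun j => b j)]
      rfl
    rw [← Submodule.map_top, ← (b i).span_eq, Submodule.map_span, ← Set.range_comp, hbasis,
      Fin.range_fin_succ, Submodule.span_insert, Pi.single_zero]
    rfl
  have hw : PiTensorProduct.tprod K (fun i => b i 0) = B 0 := by simp [B]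
  have hidx : Set.range (B ∘ segreTangentIndex) =
      insert (B 0) (⋃ i, Set.range fun c : Fin (n i) => B (Pi.single i c.succ)) := by
    unfold segreTangentIndex
    rw [Set.range_comp, Option.range_elim, Set.image_insert_eq,
      Set.range_sigma_eq_iUnion_range, Set.image_iUnion]
    simp only [← Set.range_comp]
    rfl
  rw [segreTangent, hidx, Submodule.span_insert, Submodule.span_iUnion, hw]
  simp only [hline, iSup_sup_eq, ← sup_assoc, sup_eq_left.mpr iSup_const_le]

theorem finrank_segreTangent [Fintype ι] {n : ι → ℕ} [∀ i, FiniteDimensional K (V i)]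
    (hdim : ∀ i, finrank K (V i) = n i + 1) {v : ∀ i, V i} (hv : ∀ i, v i ≠ 0) :
    finrank K (segreTangent K v) = 1 + ∑ i, n i := by
  choose b hb using fun i => Basis.exists_fin_succ_zero_eq (hdim i) (hv i)
  obtain rfl : v = fun i => b i 0 := funext fun i => (hb i).symm
  rw [segreTangent_eq_span, finrank_span_eq_card
    ((Basis.piTensorProduct b).linearIndependent.comp _ segreTangentIndex_injective)]
  simp [Fintype.card_sigma, add_comm]

theorem tensorTangent_segreTangent {X : Type*} [AddCommGroup X] [Module K X] (x : X)
    (v : ∀ i, V i) :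
    tensorTangent x (PiTensorProduct.tprod K v) (segreTangent K v) =
      LinearMap.range ((TensorProduct.mk K X _).flip (PiTensorProduct.tprod K v)) ⊔
      ⨆ i, LinearMap.range
        ((TensorProduct.mk K X _ x) ∘ₗ (PiTensorProduct.tprod K).toLinearMap v i) := by
  have hpoint : (K ∙ PiTensorProduct.tprod K v).map (TensorProduct.mk K X _ x) ≤
      LinearMap.range ((TensorProduct.mk K X _).flip (PiTensorProduct.tprod K v)) := by
    rw [Submodule.map_span_le]
    rintro _ rfl
    exact ⟨x, rfl⟩
  simp only [tensorTangent, segreTangent, Submodule.map_sup, Submodule.map_iSup,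
    LinearMap.range_comp, ← sup_assoc, sup_eq_left.mpr hpoint]

end Segre

theorem segre_tangent_restriction_general
    (K : Type*) [Field K] {m : ℕ}
    (n₁ h : ℕ) (n : Fin m → ℕ)
    (V₁ : Type*) [AddCommGroup V₁] [Module K V₁] [FiniteDimensional K V₁]
    (V : Fin m → Type*) [∀ i, AddCommGroup (V i)] [∀ i, Module K (V i)]
    [∀ i, FiniteDimensional K (V i)]
    (hdim₁ : Module.finrank K V₁ = n₁ + 1)
    (hdim : ∀ i, Module.finrank K (V i) = n i + 1)
    (H : Submodule K V₁) (hH : Module.finrank K H = h)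
    (v₁ : V₁) (hv₁ : v₁ ≠ 0) (v : ∀ i, V i) (hv : ∀ i, v i ≠ 0)
    (π : V₁ ⊗[K] (⨂[K] i, V i) →ₗ[K] (V₁ ⧸ H) ⊗[K] (⨂[K] i, V i))
    (hπ : π = TensorProduct.map H.mkQ LinearMap.id)
    (Tp : Submodule K (V₁ ⊗[K] (⨂[K] i, V i)))
    (hTp : Tp =
      LinearMap.range ((TensorProduct.mk K V₁ (⨂[K] i, V i)).flip (PiTensorProduct.tprod K v)) ⊔
      ⨆ i : Fin m, LinearMap.range
        ((TensorProduct.mk K V₁ (⨂[K] i, V i) v₁) ∘ₗ (PiTensorProduct.tprod K).toLinearMap v i)) :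
    (v₁ ∉ H →
      Module.finrank K (Tp ⊓ LinearMap.ker π : Submodule K (V₁ ⊗[K] (⨂[K] i, V i))) = h ∧
      Module.finrank K (Submodule.map π Tp) = 1 + (n₁ - h) + ∑ i, n i) ∧
    (v₁ ∈ H →
      Module.finrank K (Tp ⊓ LinearMap.ker π : Submodule K (V₁ ⊗[K] (⨂[K] i, V i)))
        = h + ∑ i, n i ∧
      Module.finrank K (Submodule.map π Tp) = n₁ + 1 - h) := by
  set w := PiTensorProduct.tprod K v
  have hw : w ≠ 0 := PiTensorProduct.tprod_ne_zero hv
  have hwT : w ∈ segreTangent K v :=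
    Submodule.mem_sup_left (Submodule.mem_span_singleton_self w)
  have hTp' : Tp = tensorTangent v₁ w (segreTangent K v) := by
    rw [hTp, tensorTangent_segreTangent]
  have hdimTp : finrank K Tp + 1 = (n₁ + 1) + (1 + ∑ i, n i) := by
    rw [hTp', finrank_tensorTangent hv₁ hw hwT, hdim₁, finrank_segreTangent hdim hv]
  have himage : Tp.map π = tensorTangent (H.mkQ v₁) w (segreTangent K v) := by
    rw [hπ, hTp', map_tensorTangent H.mkQ_surjective]
  have hrank := Submodule.finrank_map_add_finrank_inf_ker π Tp
  have hquot : finrank K (V₁ ⧸ H) + h = n₁ + 1 := by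
    rw [← hdim₁, ← hH, H.finrank_quotient_add_finrank]
  refine ⟨fun hv₁H => ?_, fun hv₁H => ?_⟩
  · have hq : H.mkQ v₁ ≠ 0 := by simpa [Submodule.Quotient.mk_eq_zero] using hv₁H
    have hquot_pos : 0 < finrank K (V₁ ⧸ H) := finrank_pos_iff_exists_ne_zero.mpr ⟨_, hq⟩
    have hmap := finrank_tensorTangent hq hw hwT
    rw [← himage, finrank_segreTangent hdim hv] at hmap
    omega
  · have hq : H.mkQ v₁ = 0 := by simpa [Submodule.Quotient.mk_eq_zero] using hv₁H
    rw [hq, tensorTangent_zero] at himage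
    have hmap : finrank K (Tp.map π) = finrank K (V₁ ⧸ H) :=
      himage ▸ LinearMap.finrank_range_of_inj (TensorProduct.flip_mk_injective hw)
    omega

/-- restriction lemma, primal form. Let `V₁` have dimension `n₁ + 1`,
let `H ⊆ V₁` have dimension `h`, let `V i` (`i : Fin m`) be the remaining factors with
`dim (V i) = n i + 1`, let `W = ⨂ᵢ V i` and let `π : V₁ ⊗ W → (V₁/H) ⊗ W` be the quotient
map tensored with the identity.  For nonzero `v₁ ∈ V₁` and `v i ∈ V i`, let `T_p` be the
affine tangent space at `p = v₁ ⊗ (⊗ᵢ v i)`.  If `v₁ ∉ H` then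
`dim (T_p ∩ ker π) = h` and `dim π(T_p) = 1 + (n₁ - h) + Σᵢ n i`;
if `v₁ ∈ H` then `dim (T_p ∩ ker π) = h + Σᵢ n i` and `dim π(T_p) = n₁ + 1 - h`.
(Here `H ⊗ W` is identified with its image in `V₁ ⊗ W`, i.e. with `ker π`.) -/
theorem segre_tangent_restriction
    (K : Type*) [Field K] [CharZero K] {m : ℕ}
    (n₁ h : ℕ) (n : Fin m → ℕ)
    (V₁ : Type*) [AddCommGroup V₁] [Module K V₁] [FiniteDimensional K V₁]
    (V : Fin m → Type*) [∀ i, AddCommGroup (V i)] [∀ i, Module K (V i)]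
    [∀ i, FiniteDimensional K (V i)]
    (hdim₁ : Module.finrank K V₁ = n₁ + 1)
    (hdim : ∀ i, Module.finrank K (V i) = n i + 1)
    (H : Submodule K V₁) (hH : Module.finrank K H = h)
    (v₁ : V₁) (hv₁ : v₁ ≠ 0) (v : ∀ i, V i) (hv : ∀ i, v i ≠ 0)
    (π : V₁ ⊗[K] (⨂[K] i, V i) →ₗ[K] (V₁ ⧸ H) ⊗[K] (⨂[K] i, V i))
    (hπ : π = TensorProduct.map H.mkQ LinearMap.id)
    (Tp : Submodule K (V₁ ⊗[K] (⨂[K] i, V i)))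
    (hTp : Tp =
      LinearMap.range ((TensorProduct.mk K V₁ (⨂[K] i, V i)).flip (PiTensorProduct.tprod K v)) ⊔
      ⨆ i : Fin m, LinearMap.range
        ((TensorProduct.mk K V₁ (⨂[K] i, V i) v₁) ∘ₗ (PiTensorProduct.tprod K).toLinearMap v i)) :
    (v₁ ∉ H →
      Module.finrank K (Tp ⊓ LinearMap.ker π : Submodule K (V₁ ⊗[K] (⨂[K] i, V i))) = h ∧
      Module.finrank K (Submodule.map π Tp) = 1 + (n₁ - h) + ∑ i, n i) ∧
    (v₁ ∈ H →
      Module.finrank K (Tp ⊓ LinearMap.ker π : Submodule K (V₁ ⊗[K] (⨂[K] i, V i)))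
        = h + ∑ i, n i ∧
      Module.finrank K (Submodule.map π Tp) = n₁ + 1 - h) :=
  segre_tangent_restriction_general K n₁ h n V₁ V hdim₁ hdim H hH v₁ hv₁ v hv π hπ Tp hTp
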